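/- arXiv:1905.08443 — 2 statements merged into one kernel-verified Lean document; each statement's English description precedes it below -/
import Mathlib

section
/- Consider two max-affine spline units on R^D with parameters A₁, A₂ : Fin R → R^D and B₁, B₂ : Fin R → ℝ. For indices i, j, the joint cell {x : unit 1 attains its max at i and unit 2 attains its max at j} equals the power-diagram cell with centroid μ(i,j) = A₁ i + A₂ j and radius rad(i,j) = 2(B₁ i + B₂ j) + ‖A₁ i + A₂ j‖². That is, x lies in the joint cell iff for all (i', j'), ‖x − μ(i,j)‖² − rad(i,j) ≤ ‖x − μ(i',j')‖² − rad(i',j'). -/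
/-! Expanding the square, `‖x - c‖² - (2β + ‖c‖²) = ‖x‖² - 2(⟪c, x⟫ + β)`, so the power distance
to the site `(A₁ i + A₂ j, rad i j)` is `‖x‖²` minus twice the sum of the two units' affine
pieces `i` and `j`. Minimising it over pairs `(i', j')` is therefore maximising a separable sum,
which happens exactly when each summand is maximised on its own. -/

open RealInnerProductSpace

theorem forall_le_and_forall_le_iff_forall_add_le_add {ι κ α : Type*} [AddCommMonoid α]
    [PartialOrder α] [IsOrderedCancelAddMonoid α] (f : ι → α) (g : κ → α) (i : ι) (j : κ) :
    ((∀ i', f i' ≤ f i) ∧ ∀ j', g j' ≤ g j) ↔ ∀ i' j', f i' + g j' ≤ f i + g j := by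
  refine ⟨fun ⟨hf, hg⟩ i' j' => add_le_add (hf i') (hg j'), fun h => ⟨fun i' => ?_, fun j' => ?_⟩⟩
  · exact le_of_add_le_add_right (h i' j)
  · exact le_of_add_le_add_left (h i j')

theorem norm_sub_sq_sub_two_mul_add_norm_sq {E : Type*} [NormedAddCommGroup E] [InnerProductSpace ℝ E]
    (x c : E) (β : ℝ) :
    ‖x - c‖ ^ 2 - (2 * β + ‖c‖ ^ 2) = ‖x‖ ^ 2 - 2 * (⟪c, x⟫ + β) := by
  rw [norm_sub_sq_real, real_inner_comm]
  ring

theorem two_unit_joint_cell_eq_power_diagram_cell {D R : ℕ}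
    (A₁ A₂ : Fin R → EuclideanSpace ℝ (Fin D)) (B₁ B₂ : Fin R → ℝ)
    (μ : Fin R → Fin R → EuclideanSpace ℝ (Fin D)) (rad : Fin R → Fin R → ℝ)
    (hμ : ∀ i j, μ i j = A₁ i + A₂ j)
    (hrad : ∀ i j, rad i j = 2 * (B₁ i + B₂ j) + ‖A₁ i + A₂ j‖ ^ 2)
    (i j : Fin R) :
    {x : EuclideanSpace ℝ (Fin D) |
        (∀ i', ⟪A₁ i, x⟫ + B₁ i ≥ ⟪A₁ i', x⟫ + B₁ i') ∧
        (∀ j', ⟪A₂ j, x⟫ + B₂ j ≥ ⟪A₂ j', x⟫ + B₂ j')} =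
      {x : EuclideanSpace ℝ (Fin D) |
        ∀ i' j', ‖x - μ i j‖ ^ 2 - rad i j ≤ ‖x - μ i' j'‖ ^ 2 - rad i' j'} := by
  ext x
  have power_eq : ∀ a b, ‖x - μ a b‖ ^ 2 - rad a b =
      ‖x‖ ^ 2 - 2 * ((⟪A₁ a, x⟫ + B₁ a) + (⟪A₂ b, x⟫ + B₂ b)) := by
    intro a b
    rw [hμ, hrad, norm_sub_sq_sub_two_mul_add_norm_sq, inner_add_left]
    ring
  simp only [Set.mem_ofPred_eq, ge_iff_le, power_eq, sub_le_sub_iff_left,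
    mul_le_mul_iff_right₀ two_pos]
  exact forall_le_and_forall_le_iff_forall_add_le_add (fun a => ⟪A₁ a, x⟫ + B₁ a)
    (fun b => ⟪A₂ b, x⟫ + B₂ b) i j
end

section
/- Let G : R^D → R^K be linear with transpose G^T, h ∈ R^K, and consider two max-affine units on R^K with slopes A₁, A₂ : Fin R → R^K and offsets B₁, B₂. The joint cell in x-space {x : both units attain their maxima at (i, j) when evaluated at Gx + h} equals the power-diagram cell in R^D with centroid G^T(A₁ i + A₂ j) and radius rad(i,j) = ‖G^T(A₁ i + A₂ j)‖² + 2⟨A₁ i + A₂ j, h⟩ + 2(B₁ i + B₂ j). -/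
open RealInnerProductSpace

/-! A maximum of `f i + g j` over pairs is attained exactly at pairs of maximizers, and completing
the square turns the precomposed score `⟪a, G x + h⟫ + b` into `‖x‖² / 2` minus half the power
distance from `x` to the centroid `Gᵀ a` with radius `‖Gᵀ a‖² + 2⟪a, h⟫ + 2b`. Applied to
`a = A₁ i + A₂ j`, `b = B₁ i + B₂ j`, maximizing the joint score is minimizing the power distance. -/

theorem forall_add_le_add_iff {ι κ α : Type*} [AddCommMonoid α] [PartialOrder α]
    [IsOrderedCancelAddMonoid α] (f : ι → α) (g : κ → α) (i : ι) (j : κ) :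
    (∀ i' j', f i' + g j' ≤ f i + g j) ↔ (∀ i', f i' ≤ f i) ∧ (∀ j', g j' ≤ g j) := by
  refine ⟨fun H => ⟨fun i' => ?_, fun j' => ?_⟩, fun ⟨hf, hg⟩ i' j' => add_le_add (hf i') (hg j')⟩
  · exact le_of_add_le_add_right (H i' j)
  · exact le_of_add_le_add_left (H i j')

theorem norm_sub_adjoint_sq_sub {E F : Type*} [NormedAddCommGroup E] [InnerProductSpace ℝ E]
    [FiniteDimensional ℝ E] [NormedAddCommGroup F] [InnerProductSpace ℝ F] [FiniteDimensional ℝ F]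
    (G : E →ₗ[ℝ] F) (x : E) (a h : F) (b : ℝ) :
    ‖x - LinearMap.adjoint G a‖ ^ 2 - (‖LinearMap.adjoint G a‖ ^ 2 + 2 * ⟪a, h⟫ + 2 * b) =
      ‖x‖ ^ 2 - 2 * (⟪a, G x + h⟫ + b) := by
  rw [norm_sub_sq_real, LinearMap.adjoint_inner_right, real_inner_comm, inner_add_right]
  ring

theorem two_unit_affine_precomposed_joint_cell {D K R : ℕ}
    (G : EuclideanSpace ℝ (Fin D) →ₗ[ℝ] EuclideanSpace ℝ (Fin K))
    (h : EuclideanSpace ℝ (Fin K))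
    (A₁ A₂ : Fin R → EuclideanSpace ℝ (Fin K)) (B₁ B₂ : Fin R → ℝ)
    (μ : Fin R → Fin R → EuclideanSpace ℝ (Fin D)) (rad : Fin R → Fin R → ℝ)
    (hμ : ∀ i j, μ i j = LinearMap.adjoint G (A₁ i + A₂ j))
    (hrad : ∀ i j, rad i j =
      ‖LinearMap.adjoint G (A₁ i + A₂ j)‖ ^ 2 + 2 * ⟪A₁ i + A₂ j, h⟫
        + 2 * (B₁ i + B₂ j))
    (i j : Fin R) :
    {x : EuclideanSpace ℝ (Fin D) |
        (∀ i', ⟪A₁ i, G x + h⟫ + B₁ i ≥ ⟪A₁ i', G x + h⟫ + B₁ i') ∧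
        (∀ j', ⟪A₂ j, G x + h⟫ + B₂ j ≥ ⟪A₂ j', G x + h⟫ + B₂ j')} =
      {x : EuclideanSpace ℝ (Fin D) |
        ∀ i' j', ‖x - μ i j‖ ^ 2 - rad i j ≤ ‖x - μ i' j'‖ ^ 2 - rad i' j'} := by
  ext x
  have power_dist : ∀ i' j', ‖x - μ i' j'‖ ^ 2 - rad i' j' =
      ‖x‖ ^ 2 - 2 * ((⟪A₁ i', G x + h⟫ + B₁ i') + (⟪A₂ j', G x + h⟫ + B₂ j')) := by
    intro i' j'
    rw [hμ, hrad, norm_sub_adjoint_sq_sub, inner_add_left]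
    ring
  simp only [Set.mem_ofPred_eq, ge_iff_le, power_dist, sub_le_sub_iff_left,
    mul_le_mul_iff_right₀ (two_pos : (0 : ℝ) < 2)]
  exact (forall_add_le_add_iff _ _ i j).symm
end
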